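/- arXiv:2305.16021 — 6 statements merged into one kernel-verified Lean document; each statement's English description precedes it below -/
import Mathlib

section
/- If two pointed LHS-models ⟨M,s,t⟩ and ⟨M',s',t'⟩ are LHS-bisimilar, then they satisfy exactly the same LHS formulas. -/
inductive LHSForm : Type
  | pl : ℕ → LHSForm
  | pr : ℕ → LHSForm
  | I : LHSForm
  | neg : LHSForm → LHSForm
  | and : LHSForm → LHSForm → LHSForm
  | box : LHSForm → LHSForm
  | bbox : LHSForm → LHSForm
  deriving DecidableEq

def LHSForm.or (φ ψ : LHSForm) : LHSForm := .neg (.and φ.neg ψ.neg)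
def LHSForm.imp (φ ψ : LHSForm) : LHSForm := .neg (.and φ ψ.neg)
def LHSForm.iff (φ ψ : LHSForm) : LHSForm := .and (φ.imp ψ) (ψ.imp φ)
def LHSForm.dia (φ : LHSForm) : LHSForm := .neg (.box φ.neg)
def LHSForm.bdia (φ : LHSForm) : LHSForm := .neg (.bbox φ.neg)

structure LHSModel where
  W : Type
  R : W → W → Prop
  Vl : ℕ → W → Prop
  Vr : ℕ → W → Prop

def LHSModel.sat (M : LHSModel) : M.W → M.W → LHSForm → Prop
  | s, _, .pl i => M.Vl i s
  | _, t, .pr i => M.Vr i t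
  | s, t, .I => s = t
  | s, t, .neg φ => ¬ M.sat s t φ
  | s, t, .and φ ψ => M.sat s t φ ∧ M.sat s t ψ
  | s, t, .box φ => ∀ s', M.R s s' → M.sat s' t φ
  | s, t, .bbox φ => ∀ t', M.R t t' → M.sat s t' φ

/-- Z is an LHS-bisimulation between M and M'. -/
def IsBisim (M M' : LHSModel) (Z : M.W × M.W → M'.W × M'.W → Prop) : Prop :=
  ∀ s t s' t', Z (s, t) (s', t') →
    (∀ i, M.Vl i s ↔ M'.Vl i s') ∧
    (∀ i, M.Vr i t ↔ M'.Vr i t') ∧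
    (s = t ↔ s' = t') ∧
    (∀ v, M.R s v → ∃ v', M'.R s' v' ∧ Z (v, t) (v', t')) ∧
    (∀ v, M.R t v → ∃ v', M'.R t' v' ∧ Z (s, v) (s', v')) ∧
    (∀ v', M'.R s' v' → ∃ v, M.R s v ∧ Z (v, t) (v', t')) ∧
    (∀ v', M'.R t' v' → ∃ v, M.R t v ∧ Z (s, v) (s', v'))

def LHSForm.InvariantUnder {M M' : LHSModel} (Z : M.W × M.W → M'.W × M'.W → Prop)
    (φ : LHSForm) : Prop :=
  ∀ s t s' t', Z (s, t) (s', t') → (M.sat s t φ ↔ M'.sat s' t' φ)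

namespace IsBisim

variable {M M' : LHSModel} {Z : M.W × M.W → M'.W × M'.W → Prop}

theorem invariantUnder_box (hZ : IsBisim M M' Z) {φ : LHSForm} (hφ : φ.InvariantUnder Z) :
    φ.box.InvariantUnder Z := by
  intro s t s' t' hst
  obtain ⟨-, -, -, forth, -, back, -⟩ := hZ s t s' t' hst
  constructor
  · intro h v' hv'
    obtain ⟨v, hv, hvv'⟩ := back v' hv'
    exact (hφ v t v' t' hvv').1 (h v hv)
  · intro h v hv
    obtain ⟨v', hv', hvv'⟩ := forth v hv
    exact (hφ v t v' t' hvv').2 (h v' hv')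

theorem invariantUnder_bbox (hZ : IsBisim M M' Z) {φ : LHSForm} (hφ : φ.InvariantUnder Z) :
    φ.bbox.InvariantUnder Z := by
  intro s t s' t' hst
  obtain ⟨-, -, -, -, forth, -, back⟩ := hZ s t s' t' hst
  constructor
  · intro h v' hv'
    obtain ⟨v, hv, hvv'⟩ := back v' hv'
    exact (hφ s v s' v' hvv').1 (h v hv)
  · intro h v hv
    obtain ⟨v', hv', hvv'⟩ := forth v hv
    exact (hφ s v s' v' hvv').2 (h v' hv')

theorem invariantUnder (hZ : IsBisim M M' Z) (φ : LHSForm) : φ.InvariantUnder Z := by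
  induction φ with
  | pl i => exact fun s t s' t' hst => (hZ s t s' t' hst).1 i
  | pr i => exact fun s t s' t' hst => (hZ s t s' t' hst).2.1 i
  | I => exact fun s t s' t' hst => (hZ s t s' t' hst).2.2.1
  | neg φ ih => exact fun s t s' t' hst => not_congr (ih s t s' t' hst)
  | and φ ψ ihφ ihψ =>
    exact fun s t s' t' hst => and_congr (ihφ s t s' t' hst) (ihψ s t s' t' hst)
  | box φ ih => exact hZ.invariantUnder_box ih
  | bbox φ ih => exact hZ.invariantUnder_bbox ih

end IsBisim

/-- If two pointed LHS-models are LHS-bisimilar, then they satisfy exactly the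
same LHS formulas. -/
theorem bisim_implies_modal_equivalence (M M' : LHSModel)
    (Z : M.W × M.W → M'.W × M'.W → Prop) (hZ : IsBisim M M' Z)
    (s t : M.W) (s' t' : M'.W) (hst : Z (s, t) (s', t')) :
    ∀ φ : LHSForm, M.sat s t φ ↔ M'.sat s' t' φ :=
  fun φ => hZ.invariantUnder φ s t s' t' hst
end

section
/- The first-order standard translation for LHS is correct: for every LHS formula φ and every pointed model ⟨M,s,t⟩, M,s,t ⊨ φ (in the two-dimensional LHS semantics) if and only if M ⊨ T_{x,y}(φ)[s,t] in first-order logic. -/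
/-- First-order correspondence language: unary predicates P^l_i, P^r_i,
binary relation R, equality; variables are natural numbers. -/
inductive FOForm : Type
  | pl : ℕ → ℕ → FOForm
  | pr : ℕ → ℕ → FOForm
  | rel : ℕ → ℕ → FOForm
  | eq : ℕ → ℕ → FOForm
  | neg : FOForm → FOForm
  | and : FOForm → FOForm → FOForm
  | imp : FOForm → FOForm → FOForm
  | all : ℕ → FOForm → FOForm

/-- First-order satisfaction in an LHS model viewed as an L¹-structure. -/
def FOsat (M : LHSModel) : (ℕ → M.W) → FOForm → Prop
  | g, .pl i x => M.Vl i (g x)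
  | g, .pr i y => M.Vr i (g y)
  | g, .rel x y => M.R (g x) (g y)
  | g, .eq x y => g x = g y
  | g, .neg α => ¬ FOsat M g α
  | g, .and α β => FOsat M g α ∧ FOsat M g β
  | g, .imp α β => FOsat M g α → FOsat M g β
  | g, .all x α => ∀ w, FOsat M (Function.update g x w) α

/-- Free variables of a first-order formula. -/
def FOForm.freeVars : FOForm → Set ℕ
  | .pl _ x => {x}
  | .pr _ y => {y}
  | .rel x y => {x, y}
  | .eq x y => {x, y}
  | .neg α => α.freeVars
  | .and α β => α.freeVars ∪ β.freeVars
  | .imp α β => α.freeVars ∪ β.freeVars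
  | .all x α => α.freeVars \ {x}

/-- The standard translation T_{x,y} of LHS into the correspondence
language; the fresh variable used at a modal step is `max x y + 1`. -/
def stTr : ℕ → ℕ → LHSForm → FOForm
  | x, _, .pl i => .pl i x
  | _, y, .pr i => .pr i y
  | x, y, .I => .eq x y
  | x, y, .neg φ => .neg (stTr x y φ)
  | x, y, .and φ ψ => .and (stTr x y φ) (stTr x y ψ)
  | x, y, .box φ => .all (max x y + 1) (.imp (.rel x (max x y + 1)) (stTr (max x y + 1) y φ))
  | x, y, .bbox φ => .all (max x y + 1) (.imp (.rel y (max x y + 1)) (stTr x (max x y + 1) φ))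

/- Reading the evaluation points off an arbitrary assignment `g` makes the induction go through
without a coincidence lemma for free variables: the fresh variable `max x y + 1` differs from
`x` and `y`, so binding it leaves their values untouched. -/
theorem LHSModel.sat_iff_FOsat_stTr (M : LHSModel) (φ : LHSForm) {x y : ℕ} (hxy : x ≠ y)
    (g : ℕ → M.W) : M.sat (g x) (g y) φ ↔ FOsat M g (stTr x y φ) := by
  induction φ generalizing x y g with
  | pl i | pr i | I => rfl
  | neg φ ih => exact not_congr (ih hxy g)
  | and φ ψ ihφ ihψ => exact and_congr (ihφ hxy g) (ihψ hxy g)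
  | box φ ih =>
    have hxz : x ≠ max x y + 1 := by omega
    have hyz : y ≠ max x y + 1 := by omega
    refine forall_congr' fun w => imp_congr ?_ ?_
    · simp only [FOsat, Function.update_self, Function.update_of_ne hxz]
    · rw [← ih hyz.symm, Function.update_self, Function.update_of_ne hyz]
  | bbox φ ih =>
    have hxz : x ≠ max x y + 1 := by omega
    have hyz : y ≠ max x y + 1 := by omega
    refine forall_congr' fun w => imp_congr ?_ ?_
    · simp only [FOsat, Function.update_self, Function.update_of_ne hyz]
    · rw [← ih hxz, Function.update_self, Function.update_of_ne hxz]

/-- Correctness of the standard translation: for every LHS formula φ and every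
pointed model ⟨M,s,t⟩, `M,s,t ⊨ φ` in the two-dimensional LHS semantics iff the
first-order translation `T_{x,y}(φ)` is satisfied in `M` under any assignment
sending `x` to `s` and `y` to `t` (for distinct variables `x ≠ y`). -/
theorem standard_translation_correct (M : LHSModel) (φ : LHSForm)
    (x y : ℕ) (hxy : x ≠ y) (g : ℕ → M.W) (s t : M.W) :
    M.sat s t φ ↔ FOsat M (Function.update (Function.update g x s) y t) (stTr x y φ) := by
  simpa [Function.update_of_ne hxy] using
    M.sat_iff_FOsat_stTr φ hxy (Function.update (Function.update g x s) y t)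
end

section
/- Every ω-saturated LHS model is LHS-saturated: if M=(W,R,V) is ω-saturated (as a first-order structure for the correspondence language), then for every set Φ of LHS formulas and all w,v∈W, (1) if every finite subset of Φ is satisfiable in R(w)×{v} then Φ is satisfiable in R(w)×{v}, and (2) if every finite subset of Φ is satisfiable in {w}×R(v) then Φ is satisfiable in {w}×R(v). -/
/-- Terms of the correspondence language expanded with constants (parameters)
for elements of `W`. -/
inductive FOTerm (W : Type) : Type
  | var : ℕ → FOTerm W
  | par : W → FOTerm W

/-- Formulas of the correspondence language with parameters from `W`. -/
inductive FOFormP (W : Type) : Type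
  | pl : ℕ → FOTerm W → FOFormP W
  | pr : ℕ → FOTerm W → FOFormP W
  | rel : FOTerm W → FOTerm W → FOFormP W
  | eq : FOTerm W → FOTerm W → FOFormP W
  | neg : FOFormP W → FOFormP W
  | and : FOFormP W → FOFormP W → FOFormP W
  | imp : FOFormP W → FOFormP W → FOFormP W
  | all : ℕ → FOFormP W → FOFormP W

def FOTerm.val {W : Type} (g : ℕ → W) : FOTerm W → W
  | .var x => g x
  | .par w => w

def FOsatP (M : LHSModel) : (ℕ → M.W) → FOFormP M.W → Prop
  | g, .pl i x => M.Vl i (x.val g)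
  | g, .pr i y => M.Vr i (y.val g)
  | g, .rel x y => M.R (x.val g) (y.val g)
  | g, .eq x y => x.val g = y.val g
  | g, .neg α => ¬ FOsatP M g α
  | g, .and α β => FOsatP M g α ∧ FOsatP M g β
  | g, .imp α β => FOsatP M g α → FOsatP M g β
  | g, .all x α => ∀ w, FOsatP M (Function.update g x w) α

def FOTerm.vars {W : Type} : FOTerm W → Set ℕ
  | .var x => {x}
  | .par _ => ∅

def FOTerm.pars {W : Type} : FOTerm W → Set W
  | .var _ => ∅
  | .par w => {w}

/-- Free variables of a formula with parameters. -/
def FOFormP.freeVars {W : Type} : FOFormP W → Set ℕ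
  | .pl _ x => x.vars
  | .pr _ y => y.vars
  | .rel x y => x.vars ∪ y.vars
  | .eq x y => x.vars ∪ y.vars
  | .neg α => α.freeVars
  | .and α β => α.freeVars ∪ β.freeVars
  | .imp α β => α.freeVars ∪ β.freeVars
  | .all x α => α.freeVars \ {x}

/-- Parameters occurring in a formula. -/
def FOFormP.pars {W : Type} : FOFormP W → Set W
  | .pl _ x => x.pars
  | .pr _ y => y.pars
  | .rel x y => x.pars ∪ y.pars
  | .eq x y => x.pars ∪ y.pars
  | .neg α => α.pars
  | .and α β => α.pars ∪ β.pars
  | .imp α β => α.pars ∪ β.pars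
  | .all _ α => α.pars

/-- ω-saturation (as a first-order structure for the correspondence language):
every type Γ(x) in the single free variable `0`, with finitely many parameters,
that is finitely realized is realized. -/
def LHSModel.OmegaSaturated (M : LHSModel) : Prop :=
  ∀ Γ : Set (FOFormP M.W),
    (∀ α ∈ Γ, FOFormP.freeVars α ⊆ {0}) →
    (⋃ α ∈ Γ, FOFormP.pars α).Finite →
    (∀ Γ₀ : Finset (FOFormP M.W), ↑Γ₀ ⊆ Γ →
        ∃ w : M.W, ∀ α ∈ Γ₀, FOsatP M (fun _ => w) α) →
    ∃ w : M.W, ∀ α ∈ Γ, FOsatP M (fun _ => w) α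

/-- M is LHS-saturated. -/
def LHSModel.LHSSaturated (M : LHSModel) : Prop :=
  ∀ (Φ : Set LHSForm) (w v : M.W),
    ((∀ Φ₀ : Finset LHSForm, ↑Φ₀ ⊆ Φ →
        ∃ s, M.R w s ∧ ∀ φ ∈ Φ₀, M.sat s v φ) →
      ∃ s, M.R w s ∧ ∀ φ ∈ Φ, M.sat s v φ) ∧
    ((∀ Φ₀ : Finset LHSForm, ↑Φ₀ ⊆ Φ →
        ∃ t, M.R v t ∧ ∀ φ ∈ Φ₀, M.sat w t φ) →
      ∃ t, M.R v t ∧ ∀ φ ∈ Φ, M.sat w t φ)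

/-- The standard translation `T_{a,b}`: `a` and `b` stand for the two coordinates, and the
bound variables are numbered from `n` on, so `n` must exceed every variable of `a` and `b`. -/
def LHSForm.stTrans {W : Type} (n : ℕ) (a b : FOTerm W) : LHSForm → FOFormP W
  | .pl i => .pl i a
  | .pr i => .pr i b
  | .I => .eq a b
  | .neg φ => .neg (φ.stTrans n a b)
  | .and φ ψ => .and (φ.stTrans n a b) (ψ.stTrans n a b)
  | .box φ => .all n (.imp (.rel a (.var n)) (φ.stTrans (n + 1) (.var n) b))
  | .bbox φ => .all n (.imp (.rel b (.var n)) (φ.stTrans (n + 1) a (.var n)))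

theorem FOTerm.val_update_of_notMem {W : Type} (g : ℕ → W) {x : ℕ} (w : W) {t : FOTerm W}
    (h : x ∉ t.vars) : t.val (Function.update g x w) = t.val g := by
  cases t with
  | var _ => exact Function.update_of_ne (Ne.symm h) w g
  | par => rfl

namespace LHSForm

variable {W : Type}

theorem freeVars_stTrans_subset (φ : LHSForm) (n : ℕ) (a b : FOTerm W) :
    (φ.stTrans n a b).freeVars ⊆ a.vars ∪ b.vars := by
  induction φ generalizing n a b with
  | pl | pr | I => simp [stTrans, FOFormP.freeVars]
  | neg φ ih => exact ih n a b
  | and φ ψ ihφ ihψ => exact Set.union_subset (ihφ n a b) (ihψ n a b)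
  | box φ ih =>
    have := ih (n + 1) (.var n) b
    simp only [stTrans, FOFormP.freeVars, FOTerm.vars] at this ⊢
    grind
  | bbox φ ih =>
    have := ih (n + 1) a (.var n)
    simp only [stTrans, FOFormP.freeVars, FOTerm.vars] at this ⊢
    grind

theorem pars_stTrans_subset (φ : LHSForm) (n : ℕ) (a b : FOTerm W) :
    (φ.stTrans n a b).pars ⊆ a.pars ∪ b.pars := by
  induction φ generalizing n a b with
  | pl | pr | I => simp [stTrans, FOFormP.pars]
  | neg φ ih => exact ih n a b
  | and φ ψ ihφ ihψ => exact Set.union_subset (ihφ n a b) (ihψ n a b)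
  | box φ ih =>
    have := ih (n + 1) (.var n) b
    simp only [stTrans, FOFormP.pars, FOTerm.pars] at this ⊢
    grind
  | bbox φ ih =>
    have := ih (n + 1) a (.var n)
    simp only [stTrans, FOFormP.pars, FOTerm.pars] at this ⊢
    grind

theorem FOsatP_stTrans_iff (M : LHSModel) (φ : LHSForm) {n : ℕ} {a b : FOTerm M.W}
    (g : ℕ → M.W) (ha : a.vars ⊆ Set.Iio n) (hb : b.vars ⊆ Set.Iio n) :
    FOsatP M g (φ.stTrans n a b) ↔ M.sat (a.val g) (b.val g) φ := by
  induction φ generalizing n a b g with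
  | pl | pr | I => rfl
  | neg φ ih => exact not_congr (ih g ha hb)
  | and φ ψ ihφ ihψ => exact and_congr (ihφ g ha hb) (ihψ g ha hb)
  | box φ ih =>
    refine forall_congr' fun s => ?_
    have hn : (FOTerm.var n : FOTerm M.W).vars ⊆ Set.Iio (n + 1) := by simp [FOTerm.vars]
    have hb' := hb.trans (Set.Iio_subset_Iio n.le_succ)
    simp only [FOsatP, ih _ hn hb', FOTerm.val.eq_1, Function.update_self,
      FOTerm.val_update_of_notMem g s fun h => lt_irrefl n (ha h),
      FOTerm.val_update_of_notMem g s fun h => lt_irrefl n (hb h)]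
  | bbox φ ih =>
    refine forall_congr' fun t => ?_
    have hn : (FOTerm.var n : FOTerm M.W).vars ⊆ Set.Iio (n + 1) := by simp [FOTerm.vars]
    have ha' := ha.trans (Set.Iio_subset_Iio n.le_succ)
    simp only [FOsatP, ih _ ha' hn, FOTerm.val.eq_1, Function.update_self,
      FOTerm.val_update_of_notMem g t fun h => lt_irrefl n (ha h),
      FOTerm.val_update_of_notMem g t fun h => lt_irrefl n (hb h)]

end LHSForm

namespace LHSModel

variable {M : LHSModel}

theorem OmegaSaturated.exists_realize_of_finite (hM : M.OmegaSaturated) {ι : Type*}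
    (Φ : Set ι) (side : FOFormP M.W) (T : ι → FOFormP M.W) {P : Set M.W} (hP : P.Finite)
    (hside : side.freeVars ⊆ {0} ∧ side.pars ⊆ P)
    (hT : ∀ i, (T i).freeVars ⊆ {0} ∧ (T i).pars ⊆ P)
    (hfin : ∀ Φ₀ : Finset ι, ↑Φ₀ ⊆ Φ →
      ∃ w, FOsatP M (fun _ => w) side ∧ ∀ i ∈ Φ₀, FOsatP M (fun _ => w) (T i)) :
    ∃ w, FOsatP M (fun _ => w) side ∧ ∀ i ∈ Φ, FOsatP M (fun _ => w) (T i) := by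
  classical
  have hfree : ∀ α ∈ insert side (T '' Φ), α.freeVars ⊆ {0} := by
    rintro _ (rfl | ⟨i, -, rfl⟩)
    exacts [hside.1, (hT i).1]
  have hpars : (⋃ α ∈ insert side (T '' Φ), α.pars).Finite := by
    refine hP.subset (Set.iUnion₂_subset ?_)
    rintro _ (rfl | ⟨i, -, rfl⟩)
    exacts [hside.2, (hT i).2]
  have hfinreal : ∀ Γ₀ : Finset (FOFormP M.W), ↑Γ₀ ⊆ insert side (T '' Φ) →
      ∃ w, ∀ α ∈ Γ₀, FOsatP M (fun _ => w) α := by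
    intro Γ₀ hΓ₀
    obtain ⟨Φ₀, hΦ₀, himage⟩ : ∃ Φ₀ : Finset ι, ↑Φ₀ ⊆ Φ ∧ Φ₀.image T = Γ₀.erase side := by
      rw [← Finset.subset_set_image_iff, Finset.coe_erase, Set.sdiff_singleton_subset_iff]
      exact hΓ₀
    obtain ⟨w, hw_side, hw⟩ := hfin Φ₀ hΦ₀
    refine ⟨w, fun α hα => ?_⟩
    obtain rfl | hne := eq_or_ne α side
    · exact hw_side
    · obtain ⟨i, hi, rfl⟩ := Finset.mem_image.1 (himage ▸ Finset.mem_erase.2 ⟨hne, hα⟩)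
      exact hw i hi
  obtain ⟨w, hw⟩ := hM _ hfree hpars hfinreal
  exact ⟨w, hw side (Set.mem_insert _ _),
    fun i hi => hw (T i) (Set.mem_insert_of_mem _ ⟨i, hi, rfl⟩)⟩

theorem FOsatP_stTrans_left (φ : LHSForm) (s v : M.W) :
    FOsatP M (fun _ => s) (φ.stTrans 1 (.var 0) (.par v)) ↔ M.sat s v φ :=
  φ.FOsatP_stTrans_iff M _ (by simp [FOTerm.vars]) (by simp [FOTerm.vars])

theorem FOsatP_stTrans_right (φ : LHSForm) (w t : M.W) :
    FOsatP M (fun _ => t) (φ.stTrans 1 (.par w) (.var 0)) ↔ M.sat w t φ :=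
  φ.FOsatP_stTrans_iff M _ (by simp [FOTerm.vars]) (by simp [FOTerm.vars])

theorem OmegaSaturated.satisfiable_left (hM : M.OmegaSaturated) (Φ : Set LHSForm) (w v : M.W)
    (hfin : ∀ Φ₀ : Finset LHSForm, ↑Φ₀ ⊆ Φ → ∃ s, M.R w s ∧ ∀ φ ∈ Φ₀, M.sat s v φ) :
    ∃ s, M.R w s ∧ ∀ φ ∈ Φ, M.sat s v φ := by
  have := hM.exists_realize_of_finite Φ (.rel (.par w) (.var 0))
    (fun φ => φ.stTrans 1 (.var 0) (.par v)) (Set.toFinite {w, v})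
    ⟨by simp [FOFormP.freeVars, FOTerm.vars], by simp [FOFormP.pars, FOTerm.pars]⟩
    (fun φ => ⟨?_, ?_⟩) (by simpa only [FOsatP_stTrans_left, FOsatP, FOTerm.val] using hfin)
  · simpa only [FOsatP_stTrans_left, FOsatP, FOTerm.val] using this
  · exact (φ.freeVars_stTrans_subset 1 _ _).trans (by simp [FOTerm.vars])
  · exact (φ.pars_stTrans_subset 1 _ _).trans (by simp [FOTerm.pars])

theorem OmegaSaturated.satisfiable_right (hM : M.OmegaSaturated) (Φ : Set LHSForm) (w v : M.W)
    (hfin : ∀ Φ₀ : Finset LHSForm, ↑Φ₀ ⊆ Φ → ∃ t, M.R v t ∧ ∀ φ ∈ Φ₀, M.sat w t φ) :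
    ∃ t, M.R v t ∧ ∀ φ ∈ Φ, M.sat w t φ := by
  have := hM.exists_realize_of_finite Φ (.rel (.par v) (.var 0))
    (fun φ => φ.stTrans 1 (.par w) (.var 0)) (Set.toFinite {w, v})
    ⟨by simp [FOFormP.freeVars, FOTerm.vars], by simp [FOFormP.pars, FOTerm.pars]⟩
    (fun φ => ⟨?_, ?_⟩) (by simpa only [FOsatP_stTrans_right, FOsatP, FOTerm.val] using hfin)
  · simpa only [FOsatP_stTrans_right, FOsatP, FOTerm.val] using this
  · exact (φ.freeVars_stTrans_subset 1 _ _).trans (by simp [FOTerm.vars])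
  · exact (φ.pars_stTrans_subset 1 _ _).trans (by simp [FOTerm.pars])

end LHSModel

/-- Every ω-saturated LHS model (as a first-order structure for the
correspondence language) is LHS-saturated. -/
theorem omegaSaturated_implies_LHSSaturated (M : LHSModel)
    (hM : M.OmegaSaturated) : M.LHSSaturated :=
  fun Φ w v => ⟨hM.satisfiable_left Φ w v, hM.satisfiable_right Φ w v⟩
end

section
/- For ω-saturated models, modal equivalence implies LHS-bisimilarity: if M and M' are ω-saturated LHS models and ⟨M,s,t⟩ and ⟨M',s',t'⟩ satisfy the same LHS formulas, then ⟨M,s,t⟩ and ⟨M',s',t'⟩ are LHS-bisimilar. -/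
/- If both models are LHS-saturated, modal equivalence of pairs is itself an
LHS-bisimulation (the Hennessy–Milner argument): for an `R`-successor `v` of `s`, every finite
part of the theory of `(v, t)` yields a diamond formula true at `(s, t)`, hence at `(s', t')`, so
that theory is finitely satisfiable among the successors of `s'` and saturation realizes it.
And ω-saturation gives LHS-saturation: the standard translation turns such a set of LHS formulas
into a first-order type in one free variable whose only parameters are the two given worlds. -/

theorem FOTerm.val_update_of_lt {W : Type} (x : FOTerm W) (g : ℕ → W) {k : ℕ} (w : W)
    (hx : ∀ i ∈ x.vars, i < k) : x.val (Function.update g k w) = x.val g := by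
  cases x with
  | var i => exact Function.update_of_ne (hx i rfl).ne _ _
  | par => rfl

theorem FOTerm.pars_finite {W : Type} (x : FOTerm W) : x.pars.Finite := by
  cases x <;> simp [FOTerm.pars]

namespace LHSForm

/-- The standard translation, with `x` and `y` standing for the two coordinates; the variable
`k` must be fresh for `x` and `y`, and bound variables are allocated from `k` upwards. -/
def st {W : Type} (k : ℕ) (x y : FOTerm W) : LHSForm → FOFormP W
  | .pl i => .pl i x
  | .pr i => .pr i y
  | .I => .eq x y
  | .neg φ => .neg (st k x y φ)
  | .and φ ψ => .and (st k x y φ) (st k x y ψ)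
  | .box φ => .all k (.imp (.rel x (.var k)) (st (k + 1) (.var k) y φ))
  | .bbox φ => .all k (.imp (.rel y (.var k)) (st (k + 1) x (.var k) φ))

theorem freeVars_st_subset {W : Type} (φ : LHSForm) (k : ℕ) (x y : FOTerm W) :
    (φ.st k x y).freeVars ⊆ x.vars ∪ y.vars := by
  induction φ generalizing k x y with
  | pl | pr | I => simp [st, FOFormP.freeVars]
  | neg φ ih => exact ih k x y
  | and φ ψ ihφ ihψ => exact Set.union_subset (ihφ k x y) (ihψ k x y)
  | box φ ih =>
    have := ih (k + 1) (.var k) y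
    simp only [st, FOFormP.freeVars, FOTerm.vars.eq_1, Set.sdiff_subset_iff] at this ⊢
    grind
  | bbox φ ih =>
    have := ih (k + 1) x (.var k)
    simp only [st, FOFormP.freeVars, FOTerm.vars.eq_1, Set.sdiff_subset_iff] at this ⊢
    grind

theorem pars_st_subset {W : Type} (φ : LHSForm) (k : ℕ) (x y : FOTerm W) :
    (φ.st k x y).pars ⊆ x.pars ∪ y.pars := by
  induction φ generalizing k x y with
  | pl | pr | I => simp [st, FOFormP.pars]
  | neg φ ih => exact ih k x y
  | and φ ψ ihφ ihψ => exact Set.union_subset (ihφ k x y) (ihψ k x y)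
  | box φ ih =>
    have := ih (k + 1) (.var k) y
    simp only [st, FOFormP.pars, FOTerm.pars.eq_1, Set.union_empty, Set.empty_union] at this ⊢
    exact Set.union_subset Set.subset_union_left (this.trans Set.subset_union_right)
  | bbox φ ih =>
    have := ih (k + 1) x (.var k)
    simp only [st, FOFormP.pars, FOTerm.pars.eq_1, Set.union_empty] at this ⊢
    exact Set.union_subset Set.subset_union_right (this.trans Set.subset_union_left)

theorem FOsatP_st_iff (M : LHSModel) (φ : LHSForm) {k : ℕ} {x y : FOTerm M.W} (g : ℕ → M.W)
    (hx : ∀ i ∈ x.vars, i < k) (hy : ∀ i ∈ y.vars, i < k) :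
    FOsatP M g (φ.st k x y) ↔ M.sat (x.val g) (y.val g) φ := by
  induction φ generalizing k x y g with
  | pl | pr | I => rfl
  | neg φ ih => exact not_congr (ih g hx hy)
  | and φ ψ ihφ ihψ => exact and_congr (ihφ g hx hy) (ihψ g hx hy)
  | box φ ih =>
    refine forall_congr' fun w => ?_
    simp only [FOsatP]
    rw [ih (x := .var k) _ (by simp [FOTerm.vars]) fun i hi => Nat.lt_succ_of_lt (hy i hi)]
    simp only [x.val_update_of_lt g w hx, y.val_update_of_lt g w hy, FOTerm.val.eq_1,
      Function.update_self]
  | bbox φ ih =>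
    refine forall_congr' fun w => ?_
    simp only [FOsatP]
    rw [ih (y := .var k) _ (fun i hi => Nat.lt_succ_of_lt (hx i hi)) (by simp [FOTerm.vars])]
    simp only [x.val_update_of_lt g w hx, y.val_update_of_lt g w hy, FOTerm.val.eq_1,
      Function.update_self]

def conj : List LHSForm → LHSForm
  | [] => .neg (.and .I (.neg .I))
  | φ :: l => .and φ (conj l)

end LHSForm

namespace LHSModel

variable {M M' : LHSModel}

theorem sat_conj {a b : M.W} (l : List LHSForm) :
    M.sat a b (LHSForm.conj l) ↔ ∀ φ ∈ l, M.sat a b φ := by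
  induction l with
  | nil => simp [LHSForm.conj, sat]
  | cons φ l ih => simp [LHSForm.conj, sat, ih]

theorem sat_dia {a b : M.W} {φ : LHSForm} : M.sat a b φ.dia ↔ ∃ v, M.R a v ∧ M.sat v b φ := by
  simp [LHSForm.dia, sat]

theorem sat_bdia {a b : M.W} {φ : LHSForm} : M.sat a b φ.bdia ↔ ∃ v, M.R b v ∧ M.sat a v φ := by
  simp [LHSForm.bdia, sat]

theorem OmegaSaturated.exists_realize (hM : M.OmegaSaturated) {ι : Type*}
    (α₀ : FOFormP M.W) (T : ι → FOFormP M.W) (S : Set ι)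
    (hfv₀ : α₀.freeVars ⊆ {0}) (hfv : ∀ i ∈ S, (T i).freeVars ⊆ {0})
    (hpars : (α₀.pars ∪ ⋃ i ∈ S, (T i).pars).Finite)
    (hfin : ∀ S₀ : Finset ι, ↑S₀ ⊆ S →
      ∃ w, FOsatP M (fun _ => w) α₀ ∧ ∀ i ∈ S₀, FOsatP M (fun _ => w) (T i)) :
    ∃ w, FOsatP M (fun _ => w) α₀ ∧ ∀ i ∈ S, FOsatP M (fun _ => w) (T i) := by
  classical
  have hfinΓ (Γ₀ : Finset (FOFormP M.W)) (hΓ₀ : ↑Γ₀ ⊆ insert α₀ (T '' S)) :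
      ∃ w, ∀ α ∈ Γ₀, FOsatP M (fun _ => w) α := by
    have hsub : ↑(Γ₀.erase α₀) ⊆ T '' S := fun α hα => by
      rw [Finset.coe_erase] at hα
      exact (hΓ₀ hα.1).resolve_left hα.2
    obtain ⟨S₀, hS₀, hS₀Γ⟩ := Finset.subset_set_image_iff.1 hsub
    obtain ⟨w, hw₀, hw⟩ := hfin S₀ hS₀
    refine ⟨w, fun α hα => ?_⟩
    by_cases h : α = α₀
    · exact h ▸ hw₀
    · obtain ⟨i, hi, rfl⟩ := Finset.mem_image.1 (hS₀Γ ▸ Finset.mem_erase.2 ⟨h, hα⟩)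
      exact hw i hi
  obtain ⟨w, hw⟩ := hM (insert α₀ (T '' S))
    (Set.forall_mem_insert.2 ⟨hfv₀, Set.forall_mem_image.2 hfv⟩)
    (by rwa [Set.biUnion_insert, Set.biUnion_image]) hfinΓ
  exact ⟨w, hw _ (Set.mem_insert _ _), fun i hi => hw _ (Set.mem_insert_of_mem _ ⟨i, hi, rfl⟩)⟩

/-- The terms `x` and `y` place the sought successor in one of the two coordinates. -/
theorem OmegaSaturated.exists_rel_sat_of_finitely_sat (hM : M.OmegaSaturated) (c : M.W)
    {x y : FOTerm M.W} (hx : x.vars ⊆ {0}) (hy : y.vars ⊆ {0}) (Φ : Set LHSForm)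
    (hfin : ∀ Φ₀ : Finset LHSForm, ↑Φ₀ ⊆ Φ →
      ∃ a, M.R c a ∧ ∀ φ ∈ Φ₀, M.sat (x.val fun _ => a) (y.val fun _ => a) φ) :
    ∃ a, M.R c a ∧ ∀ φ ∈ Φ, M.sat (x.val fun _ => a) (y.val fun _ => a) φ := by
  have fresh {z : FOTerm M.W} (hz : z.vars ⊆ {0}) : ∀ i ∈ z.vars, i < 1 := fun i hi => by
    simpa using hz hi
  simp only [← LHSForm.FOsatP_st_iff M _ _ (fresh hx) (fresh hy)] at hfin ⊢
  exact hM.exists_realize (.rel (.par c) (.var 0)) _ Φ (by simp [FOFormP.freeVars, FOTerm.vars])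
    (fun φ _ => (φ.freeVars_st_subset 1 x y).trans (Set.union_subset hx hy))
    (((Set.finite_singleton c).union (x.pars_finite.union y.pars_finite)).subset
      (Set.union_subset_union (by simp [FOFormP.pars, FOTerm.pars])
        (Set.iUnion₂_subset fun φ _ => φ.pars_st_subset 1 x y)))
    hfin

theorem OmegaSaturated.lhsSaturated (hM : M.OmegaSaturated) : M.LHSSaturated :=
  fun Φ w v =>
    ⟨hM.exists_rel_sat_of_finitely_sat w (x := .var 0) (y := .par v) (by simp [FOTerm.vars])
        (by simp [FOTerm.vars]) Φ,
      hM.exists_rel_sat_of_finitely_sat v (x := .par w) (y := .var 0) (by simp [FOTerm.vars])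
        (by simp [FOTerm.vars]) Φ⟩

def ModalEquiv (M M' : LHSModel) (p : M.W × M.W) (q : M'.W × M'.W) : Prop :=
  ∀ φ, M.sat p.1 p.2 φ ↔ M'.sat q.1 q.2 φ

theorem ModalEquiv.symm {p : M.W × M.W} {q : M'.W × M'.W} (h : ModalEquiv M M' p q) :
    ModalEquiv M' M q p :=
  fun φ => (h φ).symm

theorem modalEquiv_of_forall_sat_imp {p : M.W × M.W} {q : M'.W × M'.W}
    (h : ∀ φ, M.sat p.1 p.2 φ → M'.sat q.1 q.2 φ) : ModalEquiv M M' p q :=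
  fun φ => ⟨h φ, fun hq => by_contra fun hp => h φ.neg hp hq⟩

theorem ModalEquiv.exists_left_succ (hM' : M'.LHSSaturated) {a b : M.W} {a' b' : M'.W}
    (h : ModalEquiv M M' (a, b) (a', b')) {v : M.W} (hv : M.R a v) :
    ∃ v', M'.R a' v' ∧ ModalEquiv M M' (v, b) (v', b') := by
  obtain ⟨v', hv', hsat⟩ := (hM' {φ | M.sat v b φ} a' b').1 fun Φ₀ hΦ₀ => by
    have hdia : M.sat a b (LHSForm.conj Φ₀.toList).dia :=
      sat_dia.2 ⟨v, hv, (sat_conj _).2 fun φ hφ => hΦ₀ (Finset.mem_toList.1 hφ)⟩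
    obtain ⟨u, hu, hconj⟩ := sat_dia.1 ((h _).1 hdia)
    exact ⟨u, hu, fun φ hφ => (sat_conj _).1 hconj φ (Finset.mem_toList.2 hφ)⟩
  exact ⟨v', hv', modalEquiv_of_forall_sat_imp hsat⟩

theorem ModalEquiv.exists_right_succ (hM' : M'.LHSSaturated) {a b : M.W} {a' b' : M'.W}
    (h : ModalEquiv M M' (a, b) (a', b')) {v : M.W} (hv : M.R b v) :
    ∃ v', M'.R b' v' ∧ ModalEquiv M M' (a, v) (a', v') := by
  obtain ⟨v', hv', hsat⟩ := (hM' {φ | M.sat a v φ} a' b').2 fun Φ₀ hΦ₀ => by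
    have hbdia : M.sat a b (LHSForm.conj Φ₀.toList).bdia :=
      sat_bdia.2 ⟨v, hv, (sat_conj _).2 fun φ hφ => hΦ₀ (Finset.mem_toList.1 hφ)⟩
    obtain ⟨u, hu, hconj⟩ := sat_bdia.1 ((h _).1 hbdia)
    exact ⟨u, hu, fun φ hφ => (sat_conj _).1 hconj φ (Finset.mem_toList.2 hφ)⟩
  exact ⟨v', hv', modalEquiv_of_forall_sat_imp hsat⟩

theorem isBisim_modalEquiv (hM : M.LHSSaturated) (hM' : M'.LHSSaturated) :
    IsBisim M M' (ModalEquiv M M') := by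
  intro a b a' b' h
  refine ⟨fun i => h (.pl i), fun i => h (.pr i), h .I, fun v hv => h.exists_left_succ hM' hv,
    fun v hv => h.exists_right_succ hM' hv, fun v' hv' => ?_, fun v' hv' => ?_⟩
  · obtain ⟨v, hv, hv'⟩ := h.symm.exists_left_succ hM hv'
    exact ⟨v, hv, hv'.symm⟩
  · obtain ⟨v, hv, hv'⟩ := h.symm.exists_right_succ hM hv'
    exact ⟨v, hv, hv'.symm⟩

end LHSModel

/-- For ω-saturated models, modal equivalence implies LHS-bisimilarity: if
⟨M,s,t⟩ and ⟨M',s',t'⟩ satisfy the same LHS formulas and both models are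
ω-saturated, then the two pointed models are LHS-bisimilar. -/
theorem modal_equivalence_implies_bisim_of_omegaSaturated
    (M M' : LHSModel) (hM : M.OmegaSaturated) (hM' : M'.OmegaSaturated)
    (s t : M.W) (s' t' : M'.W)
    (heq : ∀ φ : LHSForm, M.sat s t φ ↔ M'.sat s' t' φ) :
    ∃ Z : M.W × M.W → M'.W × M'.W → Prop,
      IsBisim M M' Z ∧ Z (s, t) (s', t') :=
  ⟨LHSModel.ModalEquiv M M', LHSModel.isBisim_modalEquiv hM.lhsSaturated hM'.lhsSaturated, heq⟩
end

section
/- Validity of the splitting axioms: for all φ∈L_□ and ψ∈L_■, the formulas □(φ∨ψ) ↔ (□φ∨ψ) and ■(φ∨ψ) ↔ (φ∨■ψ) are valid in all LHS models, i.e., for every model M and all states s,t: M,s,t ⊨ □(φ∨ψ) iff M,s,t ⊨ □φ∨ψ, and M,s,t ⊨ ■(φ∨ψ) iff M,s,t ⊨ φ∨■ψ. -/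
/-- The left fragment L_□: only left variables, ¬, ∧, □. -/
inductive IsLeft : LHSForm → Prop
  | pl (i : ℕ) : IsLeft (.pl i)
  | neg {φ} : IsLeft φ → IsLeft φ.neg
  | and {φ ψ} : IsLeft φ → IsLeft ψ → IsLeft (φ.and ψ)
  | box {φ} : IsLeft φ → IsLeft φ.box

/-- The right fragment L_■: only right variables, ¬, ∧, ■. -/
inductive IsRight : LHSForm → Prop
  | pr (i : ℕ) : IsRight (.pr i)
  | neg {φ} : IsRight φ → IsRight φ.neg
  | and {φ ψ} : IsRight φ → IsRight ψ → IsRight (φ.and ψ)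
  | bbox {φ} : IsRight φ → IsRight φ.bbox

/-- Formulas of L⁻: no occurrence of the constant I. -/
inductive NoI : LHSForm → Prop
  | pl (i : ℕ) : NoI (.pl i)
  | pr (i : ℕ) : NoI (.pr i)
  | neg {φ} : NoI φ → NoI φ.neg
  | and {φ ψ} : NoI φ → NoI ψ → NoI (φ.and ψ)
  | box {φ} : NoI φ → NoI φ.box
  | bbox {φ} : NoI φ → NoI φ.bbox

/-- One-dimensional Kripke satisfaction (□ and ■ both read as the box). -/
def LHSModel.sat1 (M : LHSModel) : M.W → LHSForm → Prop
  | w, .pl i => M.Vl i w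
  | w, .pr i => M.Vr i w
  | _, .I => True
  | w, .neg φ => ¬ M.sat1 w φ
  | w, .and φ ψ => M.sat1 w φ ∧ M.sat1 w ψ
  | w, .box φ => ∀ v, M.R w v → M.sat1 v φ
  | w, .bbox φ => ∀ v, M.R w v → M.sat1 v φ

/-!
A formula of `L_□` reads only the first coordinate of a pair of states, and a formula of `L_■` only
the second. So in `□(φ ∨ ψ)` at `(s, t)` the disjunct `ψ` has the same value at every `(s', t)`
and can be pulled out of the box, and dually `φ` can be pulled out of `■(φ ∨ ψ)`.
-/

theorem forall_imp_or_const_right {α : Type*} {r p : α → Prop} {q : Prop} :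
    (∀ x, r x → p x ∨ q) ↔ (∀ x, r x → p x) ∨ q := by
  simp only [imp_iff_not_or, ← or_assoc, forall_or_right]

namespace LHSModel

variable (M : LHSModel)

@[simp]
theorem sat_or {s t : M.W} {φ ψ : LHSForm} : M.sat s t (φ.or ψ) ↔ M.sat s t φ ∨ M.sat s t ψ := by
  simp only [LHSForm.or, sat, not_and_or, not_not]

variable {M}

theorem sat_congr_right_of_isLeft {φ : LHSForm} (hφ : IsLeft φ) (s t t' : M.W) :
    M.sat s t φ ↔ M.sat s t' φ := by
  induction hφ generalizing s with
  | pl i => rfl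
  | neg _ ih => exact not_congr (ih s)
  | and _ _ ih₁ ih₂ => exact and_congr (ih₁ s) (ih₂ s)
  | box _ ih => exact forall_congr' fun s' => imp_congr_right fun _ => ih s'

theorem sat_congr_left_of_isRight {ψ : LHSForm} (hψ : IsRight ψ) (s s' t : M.W) :
    M.sat s t ψ ↔ M.sat s' t ψ := by
  induction hψ generalizing t with
  | pr i => rfl
  | neg _ ih => exact not_congr (ih t)
  | and _ _ ih₁ ih₂ => exact and_congr (ih₁ t) (ih₂ t)
  | bbox _ ih => exact forall_congr' fun t' => imp_congr_right fun _ => ih t'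

end LHSModel

open LHSModel in
/-- Validity of the splitting axioms: for all φ ∈ L_□ and ψ ∈ L_■, the formulas
□(φ∨ψ) ↔ (□φ∨ψ) and ■(φ∨ψ) ↔ (φ∨■ψ) are valid in all LHS models. -/
theorem splitting_axioms_valid (φ ψ : LHSForm) (hφ : IsLeft φ) (hψ : IsRight ψ)
    (M : LHSModel) (s t : M.W) :
    (M.sat s t ((φ.or ψ).box) ↔ M.sat s t ((φ.box).or ψ)) ∧
    (M.sat s t ((φ.or ψ).bbox) ↔ M.sat s t (φ.or (ψ.bbox))) := by
  simp only [sat_or, sat]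
  constructor
  · simp only [sat_congr_left_of_isRight hψ _ s t]
    exact forall_imp_or_const_right
  · simp only [sat_congr_right_of_isLeft hφ s _ t, or_comm (a := M.sat s t φ)]
    exact forall_imp_or_const_right
end

section
/- Frame definability of confluence in LHS: a frame F=(W,R) validates the LHS formula I → □■◇◆I (at all pairs of states, under all valuations) if and only if R is confluent, i.e., for all x,y₁,y₂ ∈ W, if Rxy₁ and Rxy₂ then there exists z with Ry₁z and Ry₂z. -/
namespace LHSModel

variable (M : LHSModel) {s t : M.W} {φ ψ : LHSForm}

@[simp]
theorem sat_I : M.sat s t .I ↔ s = t := Iff.rfl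

@[simp]
theorem sat_imp : M.sat s t (φ.imp ψ) ↔ (M.sat s t φ → M.sat s t ψ) := by
  simp only [LHSForm.imp, sat, not_and, not_not]

@[simp]
theorem sat_box : M.sat s t φ.box ↔ ∀ s', M.R s s' → M.sat s' t φ := Iff.rfl

@[simp]
theorem sat_bbox : M.sat s t φ.bbox ↔ ∀ t', M.R t t' → M.sat s t' φ := Iff.rfl

@[simp]
theorem sat_dia_s18 : M.sat s t φ.dia ↔ ∃ s', M.R s s' ∧ M.sat s' t φ := by
  simp only [LHSForm.dia, sat, not_forall, not_not, exists_prop]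

@[simp]
theorem sat_bdia_s18 : M.sat s t φ.bdia ↔ ∃ t', M.R t t' ∧ M.sat s t' φ := by
  simp only [LHSForm.bdia, sat, not_forall, not_not, exists_prop]

theorem sat_dia_bdia_I : M.sat s t LHSForm.I.bdia.dia ↔ ∃ z, M.R s z ∧ M.R t z := by
  simp only [sat_dia_s18, sat_bdia_s18, sat_I]
  exact ⟨fun ⟨z, hsz, _, htz, rfl⟩ => ⟨z, hsz, htz⟩, fun ⟨z, hsz, htz⟩ => ⟨z, hsz, z, htz, rfl⟩⟩

theorem sat_confluence_formula :
    M.sat s t (LHSForm.I.imp LHSForm.I.bdia.dia.bbox.box) ↔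
      (s = t → ∀ y₁, M.R s y₁ → ∀ y₂, M.R t y₂ → ∃ z, M.R y₁ z ∧ M.R y₂ z) := by
  simp only [sat_imp, sat_I, sat_box, sat_bbox, sat_dia_bdia_I]

end LHSModel

/-- Frame definability of confluence: a frame (W,R) validates the LHS formula
I → □■◇◆I at all pairs of states under all valuations iff R is confluent. -/
theorem confluence_definability (W : Type) (R : W → W → Prop) :
    (∀ (Vl Vr : ℕ → W → Prop) (s t : W),
        LHSModel.sat { W := W, R := R, Vl := Vl, Vr := Vr } s t
          (LHSForm.I.imp ((LHSForm.I.bdia.dia).bbox.box))) ↔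
    (∀ x y₁ y₂ : W, R x y₁ → R x y₂ → ∃ z, R y₁ z ∧ R y₂ z) := by
  simp only [LHSModel.sat_confluence_formula]
  constructor
  · intro hvalid x y₁ y₂ hxy₁ hxy₂
    exact hvalid (fun _ _ => True) (fun _ _ => True) x x rfl y₁ hxy₁ y₂ hxy₂
  · rintro hconfl Vl Vr s t rfl y₁ hsy₁ y₂ hsy₂
    exact hconfl s y₁ y₂ hsy₁ hsy₂
end
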